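/- Lemma 2.2 (viii): assume in addition that E has dimension 4 and that the trace of F is 0. Let e₁ ∈ E be a unit vector with ⟪e₁, ν⟫ = 0 and ⟪e₁, ξ⟫ = 0, and set e₂ := χ e₁. Then ⟪f e₁, e₂⟫ = 0 and ⟪f e₁, e₁⟫ = ⟪f e₂, e₂⟫ = -h. -/

import Mathlib

open RealInnerProductSpace

/-!
Since `J` is an isometry with `J² = -1`, it is skew-adjoint, so `ν, Jν, e₁, Je₁` is an orthonormal
frame, hence a basis of the 4-dimensional space. Because `F` commutes with the isometry `J`, the
quadratic form `⟪F X, X⟫` takes the same value at `X` and `J X`, so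
`0 = tr F = 2 ⟪F ν, ν⟫ + 2 ⟪F e₁, e₁⟫ = 2 h + 2 ⟪F e₁, e₁⟫`. Moreover `F ∘ J` is skew-adjoint
(symmetric times skew, commuting), so `⟪F e₁, J e₁⟫ = 0`. Finally `f` differs from `F` by a
multiple of `ν`, which is invisible to vectors orthogonal to `ν`, such as `e₁` and `e₂ = J e₁`.
-/

theorem LinearMap.trace_eq_sum_inner_of_orthonormal {𝕜 E ι : Type*} [RCLike 𝕜]
    [NormedAddCommGroup E] [InnerProductSpace 𝕜 E] [FiniteDimensional 𝕜 E] [Fintype ι]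
    {v : ι → E} (hv : Orthonormal 𝕜 v) (hcard : Fintype.card ι = Module.finrank 𝕜 E)
    (T : E →ₗ[𝕜] E) : T.trace 𝕜 E = ∑ i, inner 𝕜 (v i) (T (v i)) := by
  have hspan := hv.linearIndependent.span_eq_top_of_card_eq_finrank' hcard
  simpa only [OrthonormalBasis.coe_mk] using T.trace_eq_sum_inner (OrthonormalBasis.mk hv hspan.ge)

section

variable {E : Type*} [NormedAddCommGroup E] [InnerProductSpace ℝ E]

structure IsOrthogonalComplexStructure (J : E →ₗ[ℝ] E) : Prop where
  apply_apply : ∀ X, J (J X) = -X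
  inner_apply_apply : ∀ X Y, ⟪J X, J Y⟫ = ⟪X, Y⟫

namespace IsOrthogonalComplexStructure

variable {J : E →ₗ[ℝ] E}

theorem inner_apply_left (hJ : IsOrthogonalComplexStructure J) (X Y : E) :
    ⟪J X, Y⟫ = -⟪X, J Y⟫ := by
  rw [← hJ.inner_apply_apply X (J Y), hJ.apply_apply, inner_neg_right, neg_neg]

theorem inner_apply_self (hJ : IsOrthogonalComplexStructure J) (X : E) : ⟪J X, X⟫ = 0 := by
  have h := hJ.inner_apply_left X X
  rw [real_inner_comm (J X) X] at h
  linarith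

theorem norm_apply (hJ : IsOrthogonalComplexStructure J) (X : E) : ‖J X‖ = ‖X‖ := by
  rw [norm_eq_sqrt_re_inner (𝕜 := ℝ), norm_eq_sqrt_re_inner (𝕜 := ℝ)]
  exact congrArg _ (congrArg _ (hJ.inner_apply_apply X X))

theorem orthonormal_frame (hJ : IsOrthogonalComplexStructure J) {x y : E}
    (hx : ‖x‖ = 1) (hy : ‖y‖ = 1) (hxy : ⟪x, y⟫ = 0) (hJxy : ⟪J x, y⟫ = 0) :
    Orthonormal ℝ ![x, J x, y, J y] := by
  have hxJy : ⟪x, J y⟫ = 0 := by rw [← neg_eq_zero, ← hJ.inner_apply_left, hJxy]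
  have hJxJy : ⟪J x, J y⟫ = 0 := by rw [hJ.inner_apply_apply, hxy]
  have hxJx : ⟪J x, x⟫ = 0 := hJ.inner_apply_self x
  have hyJy : ⟪J y, y⟫ = 0 := hJ.inner_apply_self y
  rw [orthonormal_iff_ite]
  intro i j
  fin_cases i <;> fin_cases j <;>
    simp [hJ.norm_apply, hx, hy, hxy, hJxy, hxJy, hJxJy, hxJx, hyJy,
      inner_eq_zero_symm.mp hxy, inner_eq_zero_symm.mp hJxy, inner_eq_zero_symm.mp hxJy,
      inner_eq_zero_symm.mp hJxJy, inner_eq_zero_symm.mp hxJx, inner_eq_zero_symm.mp hyJy]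

theorem inner_map_apply_apply_of_commute (hJ : IsOrthogonalComplexStructure J) {F : E →ₗ[ℝ] E}
    (hJF : ∀ X, J (F X) = F (J X)) (X : E) : ⟪F (J X), J X⟫ = ⟪F X, X⟫ := by
  rw [← hJF, hJ.inner_apply_apply]

theorem inner_map_apply_self_of_commute (hJ : IsOrthogonalComplexStructure J) {F : E →ₗ[ℝ] E}
    (hFsym : ∀ X Y, ⟪F X, Y⟫ = ⟪X, F Y⟫) (hJF : ∀ X, J (F X) = F (J X)) (X : E) :
    ⟪F (J X), X⟫ = 0 := by
  have h : ⟪F (J X), X⟫ = -⟪X, F (J X)⟫ := by rw [hFsym, hJ.inner_apply_left, hJF]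
  rw [real_inner_comm (F (J X)) X] at h
  linarith

theorem trace_eq_of_finrank_eq_four [FiniteDimensional ℝ E] (hdim : Module.finrank ℝ E = 4)
    (hJ : IsOrthogonalComplexStructure J) {F : E →ₗ[ℝ] E} (hJF : ∀ X, J (F X) = F (J X))
    {x y : E} (hx : ‖x‖ = 1) (hy : ‖y‖ = 1) (hxy : ⟪x, y⟫ = 0) (hJxy : ⟪J x, y⟫ = 0) :
    F.trace ℝ E = 2 * ⟪F x, x⟫ + 2 * ⟪F y, y⟫ := by
  have hcard : Fintype.card (Fin 4) = Module.finrank ℝ E := by simp [hdim]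
  rw [LinearMap.trace_eq_sum_inner_of_orthonormal (hJ.orthonormal_frame hx hy hxy hJxy) hcard,
    Fin.sum_univ_four]
  simp only [Matrix.cons_val]
  rw [real_inner_comm (F x) x, real_inner_comm (F (J x)) (J x), real_inner_comm (F y) y,
    real_inner_comm (F (J y)) (J y), hJ.inner_map_apply_apply_of_commute hJF,
    hJ.inner_map_apply_apply_of_commute hJF]
  ring

end IsOrthogonalComplexStructure

end

theorem lemma22_viii_general
  {E : Type*} [NormedAddCommGroup E] [InnerProductSpace ℝ E]
  (F : E →ₗ[ℝ] E)
  (hFsym : ∀ X Y : E, ⟪F X, Y⟫ = ⟪X, F Y⟫)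
  (ν : E) (hν : ‖ν‖ = 1)
  (h : ℝ) (hh : h = ⟪F ν, ν⟫)
  (V : E)
  (f : E → E) (hf : ∀ X : E, f X = F X - ⟪X, V⟫ • ν)
  (J : E →ₗ[ℝ] E)
  (hJ2 : ∀ X : E, J (J X) = -X)
  (hJorth : ∀ X Y : E, ⟪J X, J Y⟫ = ⟪X, Y⟫)
  (hJF : ∀ X : E, J (F X) = F (J X))
  (ξ : E) (hξ : ξ = -(J ν))
  (η : E → ℝ) (hη : ∀ X : E, η X = ⟪ξ, X⟫)
  (χ : E → E) (hχ : ∀ X : E, χ X = J X - η X • ν)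
  [FiniteDimensional ℝ E] (hdim : Module.finrank ℝ E = 4)
  (htr : LinearMap.trace ℝ E F = 0)
  (e₁ : E) (he₁ : ‖e₁‖ = 1) (he₁ν : ⟪e₁, ν⟫ = 0) (he₁ξ : ⟪e₁, ξ⟫ = 0)
  (e₂ : E) (he₂ : e₂ = χ e₁)
    : ⟪f e₁, e₂⟫ = 0 ∧ ⟪f e₁, e₁⟫ = -h ∧ ⟪f e₂, e₂⟫ = -h := by
  have hJ : IsOrthogonalComplexStructure J := ⟨hJ2, hJorth⟩
  have hJνe₁ : ⟪J ν, e₁⟫ = 0 := by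
    rwa [hξ, real_inner_comm, inner_neg_left, neg_eq_zero] at he₁ξ
  have he₂J : e₂ = J e₁ := by
    rw [he₂, hχ, hη, real_inner_comm, he₁ξ, zero_smul, sub_zero]
  have he₂ν : ⟪e₂, ν⟫ = 0 := by
    rw [he₂J, hJ.inner_apply_left, real_inner_comm, hJνe₁, neg_zero]
  have hf_inner : ∀ X Y, ⟪Y, ν⟫ = 0 → ⟪f X, Y⟫ = ⟪F X, Y⟫ := by
    intro X Y hY
    rw [hf, inner_sub_left, real_inner_smul_left, real_inner_comm Y ν, hY, mul_zero, sub_zero]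
  have hFe₁ : ⟪F e₁, e₁⟫ = -h := by
    have htrace := hJ.trace_eq_of_finrank_eq_four hdim hJF hν he₁ (by rwa [real_inner_comm]) hJνe₁
    linarith
  refine ⟨?_, ?_, ?_⟩
  · rw [hf_inner _ _ he₂ν, he₂J, real_inner_comm, ← hFsym]
    exact hJ.inner_map_apply_self_of_commute hFsym hJF e₁
  · rw [hf_inner _ _ he₁ν, hFe₁]
  · rw [hf_inner _ _ he₂ν, he₂J, hJ.inner_map_apply_apply_of_commute hJF, hFe₁]

theorem lemma22_viii
  {E : Type*} [NormedAddCommGroup E] [InnerProductSpace ℝ E]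
  (F : E →ₗ[ℝ] E)
  (hFsym : ∀ X Y : E, ⟪F X, Y⟫ = ⟪X, F Y⟫)
  (hFinv : ∀ X : E, F (F X) = X)
  (ν : E) (hν : ‖ν‖ = 1)
  (h : ℝ) (hh : h = ⟪F ν, ν⟫)
  (V : E) (hV : V = F ν - h • ν)
  (f : E → E) (hf : ∀ X : E, f X = F X - ⟪X, V⟫ • ν)
  (J : E →ₗ[ℝ] E)
  (hJ2 : ∀ X : E, J (J X) = -X)
  (hJorth : ∀ X Y : E, ⟪J X, J Y⟫ = ⟪X, Y⟫)
  (hJF : ∀ X : E, J (F X) = F (J X))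
  (ξ : E) (hξ : ξ = -(J ν))
  (η : E → ℝ) (hη : ∀ X : E, η X = ⟪ξ, X⟫)
  (χ : E → E) (hχ : ∀ X : E, χ X = J X - η X • ν)
  [FiniteDimensional ℝ E] (hdim : Module.finrank ℝ E = 4)
  (htr : LinearMap.trace ℝ E F = 0)
  (e₁ : E) (he₁ : ‖e₁‖ = 1) (he₁ν : ⟪e₁, ν⟫ = 0) (he₁ξ : ⟪e₁, ξ⟫ = 0)
  (e₂ : E) (he₂ : e₂ = χ e₁)
    : ⟪f e₁, e₂⟫ = 0 ∧ ⟪f e₁, e₁⟫ = -h ∧ ⟪f e₂, e₂⟫ = -h :=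
  lemma22_viii_general F hFsym ν hν h hh V f hf J hJ2 hJorth hJF ξ hξ η hη χ hχ hdim htr e₁ he₁ he₁ν
    he₁ξ e₂ he₂
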